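/- arXiv:0912.3310 — 4 statements merged into one kernel-verified Lean document; each statement's English description precedes it below -/
import Mathlib

section
/- Let G be a finite undirected graph and v a vertex with neighborhood N(v). Consider the linear program over bid vectors ν : V → ℝ (with cost vector c = e_v, the indicator of v) maximizing the sum of ν over the cheapest vertex cover V∖{v}, subject to: ν(u) ≥ 0 for all u, ν(v) = 1 (the losing agent bids its cost), and for every vertex cover T of G, ∑_{u ∈ V∖{v}} ν(u) ≤ ∑_{u ∈ T} ν(u). Then the optimal value of this LP equals the fractional clique number of the subgraph induced by N(v) (with v removed). -/
/-!
Both optimal values are suprema of the same set. A feasible bid vector `ν` vanishes off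
`N(v) ∪ {v}` and satisfies `∑_{u ∈ I} ν u ≤ ν v = 1` for every independent set `I`, because the
complement of `I` is a vertex cover; so `ν` restricted to `N(v)` is a fractional clique of
`G[N(v)]` of the same value. Conversely, a fractional clique `x` of `G[N(v)]` extended by
`x v = 1` is a feasible bid vector: a vertex cover containing `v` misses an independent part of
`N(v)`, which weighs at most `1`, and a vertex cover avoiding `v` contains all of `N(v)`.
-/

open Finset

namespace SimpleGraph

variable {V : Type*} {G : SimpleGraph V}

theorem isIndepSet_coe_iff {I : Finset V} :
    G.IsIndepSet (I : Set V) ↔ ∀ a ∈ I, ∀ b ∈ I, ¬G.Adj a b :=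
  ⟨fun hI _ ha _ hb hab => hI ha hb hab.ne hab, fun hI _ ha _ hb _ => hI _ ha _ hb⟩

variable [Fintype V] [DecidableEq V]

section CoverBids

variable {R : Type*} [AddCommGroup R] [PartialOrder R] [IsOrderedAddMonoid R] {ν : V → R}
  {v : V}

theorem sum_le_of_isIndepSet
    (hν : ∀ T : Finset V, G.IsVertexCover T → ∑ u ∈ univ.erase v, ν u ≤ ∑ u ∈ T, ν u)
    {I : Finset V} (hI : G.IsIndepSet I) : ∑ u ∈ I, ν u ≤ ν v := by
  have hcover := hν Iᶜ (by rw [coe_compl]; exact isVertexCover_compl.2 hI)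
  rw [sum_erase_eq_sub (mem_univ v), eq_sub_of_add_eq (sum_compl_add_sum I ν)] at hcover
  exact sub_le_sub_iff_left _ |>.1 hcover

theorem eq_zero_of_not_adj (hν0 : ∀ u, 0 ≤ ν u)
    (hν : ∀ T : Finset V, G.IsVertexCover T → ∑ u ∈ univ.erase v, ν u ≤ ∑ u ∈ T, ν u)
    {u : V} (huv : u ≠ v) (hvu : ¬G.Adj v u) : ν u = 0 := by
  have hpair : G.IsIndepSet ({u, v} : Finset V) := by
    rw [coe_pair, IsIndepSet, Set.pairwise_pair]
    exact fun _ => ⟨fun h => hvu h.symm, hvu⟩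
  have hle := sum_le_of_isIndepSet hν hpair
  rw [sum_pair huv, add_le_iff_nonpos_left] at hle
  exact le_antisymm hle (hν0 u)

end CoverBids

variable [DecidableRel G.Adj]

theorem sum_univ_erase_eq_sum_adj {M : Type*} [AddCommMonoid M] {f : V → M} {v : V}
    (hf : ∀ u, u ≠ v → ¬G.Adj v u → f u = 0) :
    ∑ u ∈ univ.erase v, f u = ∑ u ∈ univ.filter (G.Adj v ·), f u :=
  (sum_subset (fun u hu => mem_erase.2 ⟨(mem_filter.1 hu).2.ne', mem_univ u⟩)
    fun u hu hnu => hf u (ne_of_mem_erase hu) (by simpa using hnu)).symm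

theorem sum_adj_le_sum_update {R : Type*} [AddCommMonoid R] [PartialOrder R]
    [IsOrderedAddMonoid R] {x : V → R} {v : V} {c : R} (hx0 : ∀ u, 0 ≤ x u)
    (hx : ∀ I : Finset V, (∀ a ∈ I, G.Adj v a) → G.IsIndepSet I → ∑ u ∈ I, x u ≤ c)
    {T : Finset V} (hT : G.IsVertexCover T) :
    ∑ u ∈ univ.filter (G.Adj v ·), x u ≤ ∑ u ∈ T, Function.update x v c u := by
  set N := univ.filter (G.Adj v ·)
  by_cases hvT : v ∈ T
  · have hout : ∑ u ∈ N \ T, x u ≤ c :=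
      hx _ (fun a ha => (mem_filter.1 (mem_sdiff.1 ha).1).2)
        ((isIndepSet_compl_iff_isVertexCover.2 hT).mono fun a ha => (mem_sdiff.1 ha).2)
    have hin : ∑ u ∈ N ∩ T, x u ≤ ∑ u ∈ T \ {v}, x u :=
      sum_le_sum_of_subset_of_nonneg
        (fun u hu => mem_sdiff.2 ⟨(mem_inter.1 hu).2,
          notMem_singleton.2 (mem_filter.1 (mem_inter.1 hu).1).2.ne'⟩)
        fun u _ _ => hx0 u
    rw [sum_update_of_mem hvT, ← sum_inter_add_sum_sdiff N T, add_comm c]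
    exact add_le_add hin hout
  · have hNT : N ⊆ T := fun u hu => (hT (mem_filter.1 hu).2).resolve_left hvT
    rw [sum_update_of_notMem hvT]
    exact sum_le_sum_of_subset_of_nonneg hNT fun u _ _ => hx0 u

end SimpleGraph

open SimpleGraph

theorem stmt4_general {V : Type*} [Fintype V] [DecidableEq V]
    (G : SimpleGraph V) [DecidableRel G.Adj]
    (v : V) :
    sSup {r : ℝ | ∃ ν : V → ℝ,
        (∀ u, 0 ≤ ν u) ∧ ν v = 1 ∧
        (∀ T : Finset V, (∀ a b : V, G.Adj a b → a ∈ T ∨ b ∈ T) →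
          ∑ u ∈ Finset.univ.erase v, ν u ≤ ∑ u ∈ T, ν u) ∧
        r = ∑ u ∈ Finset.univ.erase v, ν u}
    = sSup {r : ℝ | ∃ x : V → ℝ,
        (∀ u, 0 ≤ x u) ∧ (∀ u, ¬ G.Adj v u → x u = 0) ∧
        (∀ I : Finset V, (∀ a ∈ I, G.Adj v a) →
          (∀ a ∈ I, ∀ b ∈ I, ¬ G.Adj a b) → ∑ u ∈ I, x u ≤ 1) ∧
        r = ∑ u ∈ Finset.univ.filter (fun u => G.Adj v u), x u} := by
  congr 1
  ext r
  constructor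
  · rintro ⟨ν, hν0, hνv, hν, rfl⟩
    have hcover : ∀ T : Finset V, G.IsVertexCover T →
        ∑ u ∈ univ.erase v, ν u ≤ ∑ u ∈ T, ν u :=
      fun T hT => hν T fun _ _ hab => hT hab
    refine ⟨fun u => if G.Adj v u then ν u else 0, fun u => ite_nonneg (hν0 u) le_rfl,
      fun u hu => if_neg hu, fun I hIN hI => ?_, ?_⟩
    · rw [sum_congr rfl fun u hu => if_pos (hIN u hu), ← hνv]
      exact sum_le_of_isIndepSet hcover (isIndepSet_coe_iff.2 hI)
    · rw [sum_univ_erase_eq_sum_adj fun u huv hvu => eq_zero_of_not_adj hν0 hcover huv hvu]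
      exact sum_congr rfl fun u hu => (if_pos (mem_filter.1 hu).2).symm
  · rintro ⟨x, hx0, hxN, hx, rfl⟩
    have hsum : ∑ u ∈ univ.erase v, Function.update x v 1 u =
        ∑ u ∈ univ.filter (G.Adj v ·), x u := by
      rw [sum_update_of_notMem (notMem_erase v univ)]
      exact sum_univ_erase_eq_sum_adj fun u _ hvu => hxN u hvu
    refine ⟨Function.update x v 1, fun u => ?_, Function.update_self .., fun T hT => ?_,
      hsum.symm⟩
    · rw [Function.update_apply]
      exact ite_nonneg zero_le_one (hx0 u)
    · rw [hsum]
      exact sum_adj_le_sum_update hx0 (fun I hIN hI => hx I hIN (isIndepSet_coe_iff.1 hI))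
        fun _ _ hab => hT _ _ hab

/-- For a non-isolated vertex `v` of a finite graph `G` with cost vector the
indicator of `v`, the optimal value of the buyer-pessimal Nash LP (maximize the
total bid of the winning vertex cover `V \ {v}`, subject to nonnegativity,
`ν v = 1`, and the winning set being no more expensive than any vertex cover)
equals the fractional clique number of the subgraph induced by the
neighborhood of `v`. -/
theorem stmt4 {V : Type*} [Fintype V] [DecidableEq V]
    (G : SimpleGraph V) [DecidableRel G.Adj]
    (v : V) (hv : ∃ u, G.Adj v u) :
    sSup {r : ℝ | ∃ ν : V → ℝ,
        (∀ u, 0 ≤ ν u) ∧ ν v = 1 ∧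
        (∀ T : Finset V, (∀ a b : V, G.Adj a b → a ∈ T ∨ b ∈ T) →
          ∑ u ∈ Finset.univ.erase v, ν u ≤ ∑ u ∈ T, ν u) ∧
        r = ∑ u ∈ Finset.univ.erase v, ν u}
    = sSup {r : ℝ | ∃ x : V → ℝ,
        (∀ u, 0 ≤ x u) ∧ (∀ u, ¬ G.Adj v u → x u = 0) ∧
        (∀ I : Finset V, (∀ a ∈ I, G.Adj v a) →
          (∀ a ∈ I, ∀ b ∈ I, ¬ G.Adj a b) → ∑ u ∈ I, x u ≤ 1) ∧
        r = ∑ u ∈ Finset.univ.filter (fun u => G.Adj v u), x u} :=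
  stmt4_general G v
end

section
/- Let H be a directed graph consisting of k+1 pairwise edge-disjoint s–t paths, and let e=(u,v), e'=(u',v') be edges of H such that there is a directed path from v to u'. Then there exist k edge-disjoint s–t paths in H avoiding both e and e'; equivalently, no s–t cut of size k+1 contains both e and e'. -/
/-- A directed walk in a (multi)graph with edge set `E`, tail map `tl` and head
map `hd`. -/
inductive DWalk {V E : Type} (tl hd : E → V) : V → V → List E → Prop
  | nil (v : V) : DWalk tl hd v v []
  | cons (e : E) {b : V} {l : List E} (h : DWalk tl hd (hd e) b l) :
      DWalk tl hd (tl e) b (e :: l)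

/-!
Write `∂S : V → ℤ` for out-degree minus in-degree in an edge set `S`. An edge set with
`∂S = n • (χ_s - χ_t)` splits greedily into `n` edge-disjoint `s`-`t` trails, and the edge set
of `H` has `∂ = (k + 1) • (χ_s - χ_t)`; so it suffices to find `S ∋ e, e'` with
`∂S = χ_s - χ_t`, and then to split the complement of `S`.

If `e` and `e'` lie on a common path of `H`, that path is `S`. Otherwise let `P` be the path
through `e` and reverse the edges of `P`. In this residual graph `tl e'` is reachable from `hd e'`
without using `e` or `e'`: the vertices so reachable include `t` (along the path through `e'`)
and `hd e` (back along `P`), and an edge of `H` leaves them only if it is an edge of `P` before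
`e`, whose tail then reaches `s` backwards along `P` and from there `tl e'`. Following the walk
from `hd e` to `tl e'` therefore reaches `tl e'`. Closing this residual walk up with `e'` gives a
cycle `C` with `∂ = 0` in the residual graph, and `S = P ∆ C` works.
-/

open Finset Relation

variable {V E : Type}

namespace DWalk

variable {tl hd : E → V} {a b : V} {L : List E}

theorem exists_eq_append_cons (h : DWalk tl hd a b L) {x : E} (hx : x ∈ L) :
    ∃ L₁ L₂, L = L₁ ++ x :: L₂ ∧ DWalk tl hd a (tl x) L₁ ∧ DWalk tl hd (hd x) b L₂ := by
  induction h with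
  | nil => simp at hx
  | cons f h ih =>
    rcases List.mem_cons.1 hx with rfl | hx
    · exact ⟨[], _, rfl, nil _, h⟩
    · obtain ⟨L₁, L₂, rfl, h₁, h₂⟩ := ih hx
      exact ⟨f :: L₁, L₂, rfl, cons f h₁, h₂⟩

theorem exists_nodup (h : DWalk tl hd a b L) :
    ∃ L', L'.Sublist L ∧ L'.Nodup ∧ DWalk tl hd a b L' := by
  induction h with
  | nil v => exact ⟨[], .slnil, List.nodup_nil, nil v⟩
  | cons f _ ih =>
    obtain ⟨L', hsub, hnd, h'⟩ := ih
    by_cases hf : f ∈ L'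
    · obtain ⟨L₁, L₂, rfl, -, h₂⟩ := h'.exists_eq_append_cons hf
      have hsub₂ := List.sublist_append_right L₁ (f :: L₂)
      exact ⟨f :: L₂, (hsub₂.trans hsub).cons f, hsub₂.nodup hnd, cons f h₂⟩
    · exact ⟨f :: L', hsub.cons_cons f, List.nodup_cons.2 ⟨hf, hnd⟩, cons f h'⟩

theorem reflTransGen {r : V → V → Prop} (h : DWalk tl hd a b L)
    (hr : ∀ x ∈ L, r (tl x) (hd x)) : ReflTransGen r a b := by
  induction h with
  | nil => exact .refl
  | cons f _ ih => exact .head (hr f (by simp)) (ih fun x hx => hr x (by simp [hx]))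

theorem propagate {Q : V → Prop} (h : DWalk tl hd a b L)
    (hQ : ∀ x ∈ L, Q (tl x) → Q (hd x)) (ha : Q a) : Q b := by
  induction h with
  | nil => exact ha
  | cons f _ ih => exact ih (fun x hx => hQ x (by simp [hx])) (hQ f (by simp) ha)

end DWalk

def DAdj (tl hd : E → V) (F : Set E) (a b : V) : Prop := ∃ x ∈ F, tl x = a ∧ hd x = b

theorem exists_dWalk_of_reflTransGen {tl hd : E → V} {F : Set E} {a b : V}
    (h : ReflTransGen (DAdj tl hd F) a b) : ∃ L, DWalk tl hd a b L ∧ ∀ x ∈ L, x ∈ F := by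
  induction h using ReflTransGen.head_induction_on with
  | refl => exact ⟨[], .nil _, by simp⟩
  | head hab _ ih =>
    obtain ⟨x, hx, rfl, rfl⟩ := hab
    obtain ⟨L, hL, hLF⟩ := ih
    exact ⟨x :: L, .cons x hL, List.forall_mem_cons.2 ⟨hx, hLF⟩⟩

section Boundary

variable [DecidableEq V] (tl hd : E → V)

def boundary (F : Finset E) : V → ℤ :=
  ∑ f ∈ F, (Pi.single (tl f) 1 - Pi.single (hd f) 1)

variable {tl hd}

theorem boundary_apply (F : Finset E) (w : V) :
    boundary tl hd F w = ∑ f ∈ F, ((if w = tl f then 1 else 0) - if w = hd f then 1 else 0) := by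
  simp [boundary, Finset.sum_apply, Pi.single_apply]

theorem DWalk.boundary_toFinset [DecidableEq E] {a b : V} {L : List E} (h : DWalk tl hd a b L)
    (hL : L.Nodup) :
    boundary tl hd L.toFinset = Pi.single a 1 - Pi.single b 1 := by
  induction h with
  | nil => simp [boundary]
  | cons f _ ih =>
    obtain ⟨hf, hL⟩ := List.nodup_cons.1 hL
    rw [List.toFinset_cons, boundary, sum_insert (by simpa using hf), ← boundary, ih hL]
    abel

theorem boundary_sdiff [DecidableEq E] {F G : Finset E} (h : G ⊆ F) :
    boundary tl hd (F \ G) = boundary tl hd F - boundary tl hd G :=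
  sum_sdiff_eq_sub h

theorem exists_dWalk_of_boundary_pos [DecidableEq E] {t : V} (F : Finset E) {a : V}
    (ha : 0 < boundary tl hd F a) (hF : ∀ w, w ≠ a → w ≠ t → 0 ≤ boundary tl hd F w) :
    ∃ L, DWalk tl hd a t L ∧ ∀ x ∈ L, x ∈ F := by
  induction F using Finset.strongInduction generalizing a with
  | H F ih =>
    obtain ⟨f, hfF, rfl⟩ : ∃ f ∈ F, tl f = a := by
      by_contra! hno
      refine ha.not_ge ((boundary_apply F a).trans_le (sum_nonpos fun f hf => ?_))
      rw [if_neg (hno f hf).symm]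
      split_ifs <;> omega
    by_cases hft : hd f = t
    · exact ⟨[f], hft ▸ .cons f (.nil _), List.forall_mem_singleton.2 hfF⟩
    have herase (w : V) : boundary tl hd (F.erase f) w = boundary tl hd F w
        - ((if w = tl f then 1 else 0) - if w = hd f then 1 else 0) := by
      rw [boundary_apply, boundary_apply, sum_erase_eq_sub hfF]
    have hpos : 0 < boundary tl hd (F.erase f) (hd f) := by
      rw [herase]
      by_cases hloop : hd f = tl f
      · simpa [hloop] using ha
      · simpa [hloop] using (hF (hd f) hloop hft).trans_lt (lt_add_one _)
    have hnonneg (w : V) (hw : w ≠ hd f) (hwt : w ≠ t) : 0 ≤ boundary tl hd (F.erase f) w := by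
      rw [herase, if_neg hw]
      by_cases hwa : w = tl f
      · subst hwa
        simp only [↓reduceIte, sub_zero, sub_nonneg]
        exact ha
      · simpa [hwa] using hF w hwa hwt
    obtain ⟨L, hL, hLF⟩ := ih (F.erase f) (erase_ssubset hfF) hpos hnonneg
    exact ⟨f :: L, .cons f hL,
      List.forall_mem_cons.2 ⟨hfF, fun x hx => mem_of_mem_erase (hLF x hx)⟩⟩

end Boundary

structure EdgeDisjointTrails (tl hd : E → V) (s t : V) {ι : Type} (p : ι → List E) : Prop where
  dWalk : ∀ i, DWalk tl hd s t (p i)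
  nodup : ∀ i, (p i).Nodup
  disjoint : ∀ i j, i ≠ j → ∀ f ∈ p i, f ∉ p j

namespace EdgeDisjointTrails

variable {tl hd : E → V} {s t : V}

theorem cons {n : ℕ} {p : Fin n → List E} (hp : EdgeDisjointTrails tl hd s t p) {L : List E}
    (hL : DWalk tl hd s t L) (hLnd : L.Nodup) (hdisj : ∀ i, ∀ f ∈ p i, f ∉ L) :
    EdgeDisjointTrails tl hd s t (Fin.cons L p : Fin (n + 1) → List E) where
  dWalk i := by cases i using Fin.cases <;> simp [hL, hp.dWalk]
  nodup i := by cases i using Fin.cases <;> simp [hLnd, hp.nodup]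
  disjoint i j hij := by
    cases i using Fin.cases <;> cases j using Fin.cases <;>
      simp only [Fin.cons_zero, Fin.cons_succ, ne_eq, not_true, Fin.succ_inj] at hij ⊢
    · exact fun f hf hfp => hdisj _ f hfp hf
    · exact hdisj _
    · exact hp.disjoint _ _ hij

end EdgeDisjointTrails

theorem exists_edgeDisjointTrails_of_boundary_eq [DecidableEq V] [DecidableEq E] {tl hd : E → V}
    {s t : V} (n : ℕ) (F : Finset E) (hF : boundary tl hd F = n • (Pi.single s 1 - Pi.single t 1)) :
    ∃ p : Fin n → List E, EdgeDisjointTrails tl hd s t p ∧ ∀ i, ∀ x ∈ p i, x ∈ F := by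
  rcases eq_or_ne s t with rfl | hst
  · exact ⟨fun _ => [], ⟨fun _ => .nil s, fun _ => List.nodup_nil, by simp⟩, by simp⟩
  induction n generalizing F with
  | zero =>
    exact ⟨Fin.elim0, ⟨fun i => i.elim0, fun i => i.elim0, fun i => i.elim0⟩, fun i => i.elim0⟩
  | succ n ih =>
    have hFw (w : V) :
        boundary tl hd F w = (n + 1) • ((Pi.single s 1 - Pi.single t 1 : V → ℤ) w) := by
      rw [hF]; rfl
    have hpos : 0 < boundary tl hd F s := by simp [hFw, hst.symm]
    have hnonneg (w : V) (hws : w ≠ s) (hwt : w ≠ t) : 0 ≤ boundary tl hd F w := by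
      simp [hFw, hws, hwt]
    obtain ⟨L₀, hL₀, hL₀F⟩ := exists_dWalk_of_boundary_pos F hpos hnonneg
    obtain ⟨L, hsub, hnd, hL⟩ := hL₀.exists_nodup
    have hLF : L.toFinset ⊆ F := fun x hx => hL₀F x (hsub.subset (List.mem_toFinset.1 hx))
    obtain ⟨q, hq, hqF⟩ := ih (F \ L.toFinset)
      (by rw [boundary_sdiff hLF, hF, hL.boundary_toFinset hnd, succ_nsmul, add_sub_cancel_right])
    refine ⟨Fin.cons L q,
      hq.cons hL hnd fun i f hf hfL => (mem_sdiff.1 (hqF i f hf)).2 (List.mem_toFinset.2 hfL),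
      fun i => ?_⟩
    cases i using Fin.cases
    · simpa using fun x hx => hLF (List.mem_toFinset.2 hx)
    · simpa using fun x hx => (mem_sdiff.1 (hqF _ x hx)).1

section Residual

variable [DecidableEq E]

/-- With the edges of `P` reversed, the tail map is `flipOn P tl hd` and the head map
`flipOn P hd tl`. -/
def flipOn (P : Finset E) (f g : E → V) (x : E) : V := if x ∈ P then g x else f x

theorem boundary_symmDiff [DecidableEq V] {tl hd : E → V} (P C : Finset E) :
    boundary tl hd (symmDiff P C) =
      boundary tl hd P + boundary (flipOn P tl hd) (flipOn P hd tl) C := by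
  set g : E → V → ℤ := fun x => Pi.single (tl x) 1 - Pi.single (hd x) 1
  have hinter : ∑ x ∈ C ∩ P, (Pi.single (flipOn P tl hd x) 1 - Pi.single (flipOn P hd tl x) 1)
      = -∑ x ∈ P ∩ C, g x := by
    rw [inter_comm, ← sum_neg_distrib]
    exact sum_congr rfl fun x hx => by simp [g, flipOn, (mem_inter.1 hx).1]
  have hsdiff : ∑ x ∈ C \ P, (Pi.single (flipOn P tl hd x) 1 - Pi.single (flipOn P hd tl x) 1)
      = ∑ x ∈ C \ P, g x :=
    sum_congr rfl fun x hx => by simp [g, flipOn, (mem_sdiff.1 hx).2]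
  rw [boundary, boundary, boundary, ← sum_filter_add_sum_filter_not P (· ∈ C),
    ← sum_filter_add_sum_filter_not C (· ∈ P), filter_mem_eq_inter, filter_mem_eq_inter,
    ← sdiff_eq_filter, ← sdiff_eq_filter, hinter, hsdiff, symmDiff_def, sup_eq_union,
    sum_union disjoint_sdiff_sdiff]
  abel

variable {tl hd : E → V} {a b s t : V} {L : List E} {e e' : E}

theorem DWalk.reflTransGen_flipOn_of_not_mem {P : Finset E} {F : Set E} (h : DWalk tl hd a b L)
    (hL : ∀ x ∈ L, x ∉ P ∧ x ∈ F) :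
    ReflTransGen (DAdj (flipOn P tl hd) (flipOn P hd tl) F) a b :=
  h.reflTransGen fun x hx => ⟨x, (hL x hx).2, by simp [flipOn, (hL x hx).1]⟩

theorem DWalk.reflTransGen_flipOn_of_mem {P : Finset E} {F : Set E} (h : DWalk tl hd a b L)
    (hL : ∀ x ∈ L, x ∈ P ∧ x ∈ F) :
    ReflTransGen (DAdj (flipOn P tl hd) (flipOn P hd tl) F) b a :=
  reflTransGen_swap.1 <| h.reflTransGen fun x hx => ⟨x, (hL x hx).2, by simp [flipOn, (hL x hx).1]⟩

theorem reflTransGen_residual_hd_tl {P : List E} (hP : DWalk tl hd s t P) (hPnd : P.Nodup)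
    (he : e ∈ P) {Q : List E} (hQ : DWalk tl hd s t Q) (hQnd : Q.Nodup) (he'Q : e' ∈ Q)
    (hPQ : ∀ x ∈ Q, x ∉ P)
    {l : List E} (hl : DWalk tl hd (hd e) (tl e') l) :
    ReflTransGen (DAdj (flipOn P.toFinset tl hd) (flipOn P.toFinset hd tl) {x | x ≠ e ∧ x ≠ e'})
      (hd e') (tl e') := by
  set R := DAdj (flipOn P.toFinset tl hd) (flipOn P.toFinset hd tl) {x | x ≠ e ∧ x ≠ e'}
  have he'P : e' ∉ P := hPQ e' he'Q
  have hforth {a b : V} {L : List E} (h : DWalk tl hd a b L) (hLP : ∀ y ∈ L, y ∉ P)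
      (he'L : e' ∉ L) : ReflTransGen R a b :=
    h.reflTransGen_flipOn_of_not_mem fun y hy => ⟨List.mem_toFinset.not.2 (hLP y hy),
      fun h => hLP y hy (h ▸ he), fun h => he'L (h ▸ hy)⟩
  have hback {a b : V} {L : List E} (h : DWalk tl hd a b L) (hLP : ∀ y ∈ L, y ∈ P)
      (heL : e ∉ L) : ReflTransGen R b a :=
    h.reflTransGen_flipOn_of_mem fun y hy => ⟨List.mem_toFinset.2 (hLP y hy),
      fun h => heL (h ▸ hy), fun h => he'P (h ▸ hLP y hy)⟩
  obtain ⟨Q₁, Q₂, rfl, hQ₁, hQ₂⟩ := hQ.exists_eq_append_cons he'Q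
  have he'Q₁₂ : e' ∉ Q₁ ++ Q₂ := (List.nodup_cons.1 (List.nodup_middle.1 hQnd)).1
  have hs : ReflTransGen R s (tl e') :=
    hforth hQ₁ (fun y hy => hPQ y (by simp [hy])) (fun h => he'Q₁₂ (by simp [h]))
  have ht : ReflTransGen R (hd e') t :=
    hforth hQ₂ (fun y hy => hPQ y (by simp [hy])) (fun h => he'Q₁₂ (by simp [h]))
  have hhd {x : E} {P₁ P₂ : List E} (hPeq : P = P₁ ++ x :: P₂) (hP₂ : DWalk tl hd (hd x) t P₂)
      (heP₂ : e ∉ P₂) : ReflTransGen R (hd e') (hd x) :=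
    ht.trans (hback hP₂ (fun y hy => by simp [hPeq, hy]) heP₂)
  have hstep (x : E) (hx : ReflTransGen R (hd e') (tl e') ∨ ReflTransGen R (hd e') (tl x)) :
      ReflTransGen R (hd e') (tl e') ∨ ReflTransGen R (hd e') (hd x) := by
    by_cases hxP : x ∈ P
    · obtain ⟨P₁, P₂, hPeq, hP₁, hP₂⟩ := hP.exists_eq_append_cons hxP
      by_cases heP₂ : e ∈ P₂
      · have heP₁ : e ∉ P₁ := fun h =>
          (List.nodup_append.1 (hPeq ▸ hPnd)).2.2 e h e (List.mem_cons_of_mem x heP₂) rfl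
        exact .inl (hx.elim id fun h =>
          (h.trans (hback hP₁ (fun y hy => by simp [hPeq, hy]) heP₁)).trans hs)
      · exact .inr (hhd hPeq hP₂ heP₂)
    · by_cases hxe' : x = e'
      · exact .inr (hxe' ▸ .refl)
      · exact hx.imp_right fun h =>
          h.tail ⟨x, ⟨fun h => hxP (h ▸ he), hxe'⟩, by simp [flipOn, hxP]⟩
  have hstart : ReflTransGen R (hd e') (hd e) := by
    obtain ⟨P₁, P₂, hPeq, -, hP₂⟩ := hP.exists_eq_append_cons he
    have heP₁₂ : e ∉ P₁ ++ P₂ := (List.nodup_cons.1 (List.nodup_middle.1 (hPeq ▸ hPnd))).1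
    exact hhd hPeq hP₂ fun h => heP₁₂ (List.mem_append_right _ h)
  exact (hl.propagate (Q := fun a => ReflTransGen R (hd e') (tl e') ∨ ReflTransGen R (hd e') a)
    (fun x _ => hstep x) (.inr hstart)).elim id id

theorem exists_boundary_eq_of_reflTransGen_residual [DecidableEq V] {P : List E}
    (hP : DWalk tl hd s t P) (hPnd : P.Nodup) (he : e ∈ P) (he'P : e' ∉ P)
    (h : ReflTransGen (DAdj (flipOn P.toFinset tl hd) (flipOn P.toFinset hd tl)
      {x | x ≠ e ∧ x ≠ e'}) (hd e') (tl e')) :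
    ∃ S : Finset E, e ∈ S ∧ e' ∈ S ∧ boundary tl hd S = Pi.single s 1 - Pi.single t 1 := by
  obtain ⟨ρ₀, hρ₀, hρ₀F⟩ := exists_dWalk_of_reflTransGen h
  obtain ⟨ρ, hsub, hρnd, hρ⟩ := hρ₀.exists_nodup
  have hρF : ∀ x ∈ ρ, x ≠ e ∧ x ≠ e' := fun x hx => hρ₀F x (hsub.subset hx)
  have htl : flipOn P.toFinset tl hd e' = tl e' := by simp [flipOn, he'P]
  have hhd : flipOn P.toFinset hd tl e' = hd e' := by simp [flipOn, he'P]
  have hC :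
      DWalk (flipOn P.toFinset tl hd) (flipOn P.toFinset hd tl) (tl e') (tl e') (e' :: ρ) := by
    have hC := DWalk.cons e' (by rwa [hhd] : DWalk _ _ (flipOn P.toFinset hd tl e') (tl e') ρ)
    rwa [htl] at hC
  have hCnd : (e' :: ρ).Nodup := List.nodup_cons.2 ⟨fun h => (hρF e' h).2 rfl, hρnd⟩
  refine ⟨symmDiff P.toFinset (e' :: ρ).toFinset, ?_, ?_, ?_⟩
  · have hee' : e ≠ e' := fun h => he'P (h ▸ he)
    simpa [mem_symmDiff, he, hee'] using fun h => (hρF e h).1 rfl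
  · simp [mem_symmDiff, he'P]
  · rw [boundary_symmDiff, hP.boundary_toFinset hPnd, hC.boundary_toFinset hCnd, sub_self,
      add_zero]

end Residual

namespace EdgeDisjointTrails

variable [DecidableEq V] [DecidableEq E] {tl hd : E → V} {s t : V} {ι : Type} {p : ι → List E}

theorem exists_boundary_eq_mem_mem (hp : EdgeDisjointTrails tl hd s t p)
    (hcov : ∀ x, ∃ i, x ∈ p i) {e e' : E} {l : List E} (hl : DWalk tl hd (hd e) (tl e') l) :
    ∃ S : Finset E, e ∈ S ∧ e' ∈ S ∧ boundary tl hd S = Pi.single s 1 - Pi.single t 1 := by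
  obtain ⟨i, hei⟩ := hcov e
  by_cases he'i : e' ∈ p i
  · exact ⟨(p i).toFinset, by simpa, by simpa, (hp.dWalk i).boundary_toFinset (hp.nodup i)⟩
  obtain ⟨j, he'j⟩ := hcov e'
  have hij : i ≠ j := by rintro rfl; exact he'i he'j
  exact exists_boundary_eq_of_reflTransGen_residual (hp.dWalk i) (hp.nodup i) hei he'i
    (reflTransGen_residual_hd_tl (hp.dWalk i) (hp.nodup i) hei (hp.dWalk j) (hp.nodup j) he'j
      (fun x hx hxi => hp.disjoint i j hij x hxi hx) hl)

theorem boundary_univ [Fintype E] [Fintype ι] (hp : EdgeDisjointTrails tl hd s t p)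
    (hcov : ∀ x, ∃ i, x ∈ p i) :
    boundary tl hd univ = Fintype.card ι • (Pi.single s 1 - Pi.single t 1) := by
  have huniv : (univ : Finset E) = univ.biUnion fun i => (p i).toFinset := by
    ext x; simpa using hcov x
  have hpd : Set.PairwiseDisjoint ↑(univ : Finset ι) fun i => (p i).toFinset :=
    fun i _ j _ hij => disjoint_left.2 fun x hx hx' =>
      hp.disjoint i j hij x (List.mem_toFinset.1 hx) (List.mem_toFinset.1 hx')
  rw [boundary, huniv, sum_biUnion hpd, ← card_univ, ← sum_const]
  exact sum_congr rfl fun i _ => (hp.dWalk i).boundary_toFinset (hp.nodup i)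

end EdgeDisjointTrails

theorem stmt8_general {V E : Type} [Fintype E] (tl hd : E → V) (s t : V) (k : ℕ)
    (hH : ∃ p : Fin (k + 1) → List E,
      (∀ i, DWalk tl hd s t (p i)) ∧ (∀ i, (p i).Nodup) ∧
      (∀ i j, i ≠ j → ∀ e, e ∈ p i → e ∉ p j) ∧ (∀ e : E, ∃ i, e ∈ p i))
    (e e' : E)
    (hreach : ∃ l, DWalk tl hd (hd e) (tl e') l) :
    ∃ p : Fin k → List E,
      (∀ i, DWalk tl hd s t (p i)) ∧ (∀ i, (p i).Nodup) ∧
      (∀ i j, i ≠ j → ∀ f, f ∈ p i → f ∉ p j) ∧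
      (∀ i, e ∉ p i ∧ e' ∉ p i) := by
  classical
  obtain ⟨p, hw, hnd, hdisj, hcov⟩ := hH
  have hp : EdgeDisjointTrails tl hd s t p := ⟨hw, hnd, hdisj⟩
  obtain ⟨l, hl⟩ := hreach
  obtain ⟨S, heS, he'S, hS⟩ := hp.exists_boundary_eq_mem_mem hcov hl
  have hrest : boundary tl hd (univ \ S) = k • (Pi.single s 1 - Pi.single t 1) := by
    rw [boundary_sdiff (subset_univ S), hp.boundary_univ hcov, hS, Fintype.card_fin, succ_nsmul,
      add_sub_cancel_right]
  obtain ⟨q, hq, hqS⟩ := exists_edgeDisjointTrails_of_boundary_eq k _ hrest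
  exact ⟨q, hq.dWalk, hq.nodup, hq.disjoint, fun i =>
    ⟨fun h => (mem_sdiff.1 (hqS i e h)).2 heS, fun h => (mem_sdiff.1 (hqS i e' h)).2 he'S⟩⟩

/-- Let `H` be the edge-disjoint union of `k+1` directed `s`-`t` paths, and let
`e`, `e'` be edges such that the tail of `e'` is reachable from the head of `e`.
Then there exist `k` edge-disjoint `s`-`t` paths in `H` avoiding both `e` and `e'`. -/
theorem stmt8 {V E : Type} [Fintype E] (tl hd : E → V) (s t : V) (k : ℕ)
    (hH : ∃ p : Fin (k + 1) → List E,
      (∀ i, DWalk tl hd s t (p i)) ∧ (∀ i, (p i).Nodup) ∧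
      (∀ i j, i ≠ j → ∀ e, e ∈ p i → e ∉ p j) ∧ (∀ e : E, ∃ i, e ∈ p i))
    (e e' : E) (hne : e ≠ e')
    (hreach : ∃ l, DWalk tl hd (hd e) (tl e') l) :
    ∃ p : Fin k → List E,
      (∀ i, DWalk tl hd s t (p i)) ∧ (∀ i, (p i).Nodup) ∧
      (∀ i j, i ≠ j → ∀ f, f ∈ p i → f ∉ p j) ∧
      (∀ i, e ∉ p i ∧ e' ∉ p i) :=
  stmt8_general tl hd s t k hH e e' hreach
end

section
/- The constraint matrix of the double-cut LP is such that any integral feasibility region compatible with it arises: specifically, the LP minimize ∑_e c_e x_e subject to ∑_{e∈P} x_e ≥ 2 for every s–t path P, 0 ≤ x_e ≤ 1, has an optimal solution that is integral (0/1 valued), and this optimal 0/1 solution is exactly a minimum-cost double cut. -/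
/-- `F` is a double cut: every (edge-simple) directed `s`-`t` path contains at
least two distinct edges of `F`. -/
def IsDoubleCut {V E : Type} (tl hd : E → V) (s t : V) (F : Finset E) : Prop :=
  ∀ l : List E, DWalk tl hd s t l → l.Nodup →
    ∃ a ∈ l, ∃ b ∈ l, a ≠ b ∧ a ∈ F ∧ b ∈ F

/-!
The indicator vector of a double cut is LP-feasible, so it suffices to round every feasible
fractional `y` to a double cut of cost at most `∑ c e * y e`. Let `d v` be the `y`-length of a
shortest simple `s`-`v` path, capped at `2`. Then `d s = 0`, `d t = 2`, and `d` rises by at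
most `y e ≤ 1` along an edge `e`. For `θ ∈ (0, 1]`, every `s`-`t` path crosses the level `θ`
and the level `θ + 1`, necessarily on two distinct edges, so the edges crossing one of these
two levels form a double cut. An edge `e` crosses the levels in `(0, 2]` on a set of measure at
most `y e`, so these double cuts have average cost at most `∑ c e * y e` over `θ ∈ (0, 1]`.
-/

open MeasureTheory Set

namespace DWalk

variable {V E : Type} {tl hd : E → V}

lemma append {a b c : V} {l₁ l₂ : List E} (h₁ : DWalk tl hd a b l₁)
    (h₂ : DWalk tl hd b c l₂) : DWalk tl hd a c (l₁ ++ l₂) := by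
  induction h₁ with
  | nil => exact h₂
  | cons e _ ih => exact cons e (ih h₂)

lemma exists_of_append {a b : V} {l₁ l₂ : List E} (h : DWalk tl hd a b (l₁ ++ l₂)) :
    ∃ m, DWalk tl hd a m l₁ ∧ DWalk tl hd m b l₂ := by
  induction l₁ generalizing a with
  | nil => exact ⟨a, nil a, h⟩
  | cons e l ih =>
    cases h with
    | cons _ h' =>
      obtain ⟨m, hm₁, hm₂⟩ := ih h'
      exact ⟨m, cons e hm₁, hm₂⟩

lemma eq_of_nil {a b : V} (h : DWalk tl hd a b []) : a = b := by
  cases h; rfl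

/-- Append `e`, or cut the path just after `e` if it already passes through `e`. -/
lemma exists_nodup_sublist_concat {a : V} {l : List E} (e : E) (hw : DWalk tl hd a (tl e) l)
    (hl : l.Nodup) : ∃ l', DWalk tl hd a (hd e) l' ∧ l'.Nodup ∧ l'.Sublist (l ++ [e]) := by
  by_cases he : e ∈ l
  · obtain ⟨l₁, l₂, rfl⟩ := List.append_of_mem he
    obtain ⟨m, hm₁, hm₂⟩ := exists_of_append hw
    cases hm₂ with
    | cons _ _ =>
      have hsub : (l₁ ++ [e]).Sublist (l₁ ++ e :: l₂) :=
        (List.singleton_sublist.2 List.mem_cons_self).append_left l₁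
      exact ⟨l₁ ++ [e], hm₁.append (cons e (nil _)), hl.sublist hsub,
        hsub.trans (List.sublist_append_left _ _)⟩
  · exact ⟨l ++ [e], hw.append (cons e (nil _)), hl.append (List.nodup_singleton e)
      (by simpa using he), List.Sublist.refl _⟩

lemma exists_crossing (d : V → ℝ) {a b : V} {l : List E} (hw : DWalk tl hd a b l) {θ : ℝ}
    (ha : d a < θ) (hb : θ ≤ d b) : ∃ e ∈ l, d (tl e) < θ ∧ θ ≤ d (hd e) := by
  induction hw with
  | nil => exact absurd (hb.trans_lt ha) (lt_irrefl θ)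
  | cons e _ ih =>
    by_cases hθ : θ ≤ d (hd e)
    · exact ⟨e, List.mem_cons_self, ha, hθ⟩
    · obtain ⟨e', he', h'⟩ := ih (not_le.mp hθ) hb
      exact ⟨e', List.mem_cons_of_mem _ he', h'⟩

end DWalk

section Potential

variable {V E : Type} (tl hd : E → V) (s : V) (y : E → ℝ)

def pathLengths (v : V) : Set ℝ :=
  {r | ∃ l : List E, DWalk tl hd s v l ∧ l.Nodup ∧ (l.map y).sum = r}

/-- The cap `2` keeps the infimum over a nonempty set: with `sInf ∅ = 0`, a vertex unreachable
from `s` would otherwise get potential `0`. -/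
noncomputable def pathPotential (v : V) : ℝ :=
  sInf (insert 2 (pathLengths tl hd s y v))

variable {tl hd s y}

lemma bddBelow_insert_two_pathLengths (hy : ∀ e, 0 ≤ y e) (v : V) :
    BddBelow (insert 2 (pathLengths tl hd s y v)) := by
  refine ⟨0, ?_⟩
  rintro r (rfl | ⟨l, -, -, rfl⟩)
  · norm_num
  · exact List.sum_nonneg (List.forall_mem_map.2 fun e _ => hy e)

lemma pathPotential_le_two (hy : ∀ e, 0 ≤ y e) (v : V) : pathPotential tl hd s y v ≤ 2 :=
  csInf_le (bddBelow_insert_two_pathLengths hy v) (mem_insert _ _)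

lemma pathPotential_le_sum (hy : ∀ e, 0 ≤ y e) {v : V} {l : List E} (hw : DWalk tl hd s v l)
    (hl : l.Nodup) : pathPotential tl hd s y v ≤ (l.map y).sum :=
  csInf_le (bddBelow_insert_two_pathLengths hy v) (Or.inr ⟨l, hw, hl, rfl⟩)

lemma le_pathPotential {v : V} {r : ℝ} (h₂ : r ≤ 2)
    (hpaths : ∀ l : List E, DWalk tl hd s v l → l.Nodup → r ≤ (l.map y).sum) :
    r ≤ pathPotential tl hd s y v := by
  refine le_csInf (insert_nonempty _ _) ?_
  rintro r' (rfl | ⟨l, hw, hl, rfl⟩)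
  exacts [h₂, hpaths l hw hl]

lemma pathPotential_nonneg (hy : ∀ e, 0 ≤ y e) (v : V) : 0 ≤ pathPotential tl hd s y v :=
  le_pathPotential zero_le_two fun _ _ _ => List.sum_nonneg (List.forall_mem_map.2 fun e _ => hy e)

lemma pathPotential_self (hy : ∀ e, 0 ≤ y e) : pathPotential tl hd s y s = 0 :=
  (pathPotential_le_sum hy (DWalk.nil s) List.nodup_nil).antisymm (pathPotential_nonneg hy s)

lemma pathPotential_eq_two (hy : ∀ e, 0 ≤ y e) {t : V}
    (hfeas : ∀ l : List E, DWalk tl hd s t l → l.Nodup → (2 : ℝ) ≤ (l.map y).sum) :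
    pathPotential tl hd s y t = 2 :=
  (pathPotential_le_two hy t).antisymm (le_pathPotential le_rfl hfeas)

lemma pathPotential_hd_le (hy : ∀ e, 0 ≤ y e) (e : E) :
    pathPotential tl hd s y (hd e) ≤ pathPotential tl hd s y (tl e) + y e := by
  suffices pathPotential tl hd s y (hd e) - y e ≤ pathPotential tl hd s y (tl e) by linarith
  have hcap := pathPotential_le_two (tl := tl) (hd := hd) (s := s) hy (hd e)
  refine le_pathPotential (by linarith [hy e]) fun l hw hl => ?_
  obtain ⟨l', hw', hl', hsub⟩ := hw.exists_nodup_sublist_concat e hl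
  have : (l'.map y).sum ≤ (l.map y).sum + y e := by
    simpa using (hsub.map y).sum_le_sum (List.forall_mem_map.2 fun e _ => hy e)
  linarith [pathPotential_le_sum hy hw' hl']

end Potential

lemma intervalIntegrable_indicator_Ioc_const (p q c a b : ℝ) :
    IntervalIntegrable ((Ioc p q).indicator fun _ => c) volume a b := by
  constructor <;> exact (integrableOn_const measure_Ioc_lt_top.ne).indicator measurableSet_Ioc

lemma intervalIntegral_indicator_Ioc_const_le {a b p q c : ℝ} (hab : a ≤ b) (hc : 0 ≤ c) :
    ∫ θ in a..b, (Ioc p q).indicator (fun _ => c) θ ≤ c * max (q - p) 0 := by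
  rw [intervalIntegral.integral_of_le hab, setIntegral_indicator measurableSet_Ioc,
    setIntegral_const, smul_eq_mul, mul_comm, ← Real.volume_real_Ioc]
  exact mul_le_mul_of_nonneg_left (measureReal_mono inter_subset_right measure_Ioc_lt_top.ne) hc

lemma exists_mem_Ioc_le_intervalIntegral {f : ℝ → ℝ} (hf : IntervalIntegrable f volume 0 1) :
    ∃ θ ∈ Ioc (0 : ℝ) 1, f θ ≤ ∫ θ in (0 : ℝ)..1, f θ := by
  obtain ⟨θ, hθ, hle⟩ := exists_le_setAverage (μ := volume) (s := Ioc (0 : ℝ) 1)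
    (by simp) (by simp) hf.1
  refine ⟨θ, hθ, ?_⟩
  rwa [setAverage_eq, Real.volume_real_Ioc_of_le zero_le_one, sub_zero, inv_one, one_smul,
    ← intervalIntegral.integral_of_le zero_le_one] at hle

section Crossing

variable {V E : Type} [Fintype E] (tl hd : E → V) (d : V → ℝ)

noncomputable def crossing (θ : ℝ) : Finset E :=
  {e | d (tl e) < θ ∧ θ ≤ d (hd e)}

variable {tl hd d}

lemma mem_crossing {θ : ℝ} {e : E} :
    e ∈ crossing tl hd d θ ↔ d (tl e) < θ ∧ θ ≤ d (hd e) := by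
  simp [crossing]

lemma isDoubleCut_crossing_union [DecidableEq E] {s t : V} {θ : ℝ}
    (hstep : ∀ e, d (hd e) ≤ d (tl e) + 1) (hs : d s < θ) (ht : θ + 1 ≤ d t) :
    IsDoubleCut tl hd s t (crossing tl hd d θ ∪ crossing tl hd d (θ + 1)) := by
  intro l hw _
  obtain ⟨e₁, he₁, hlow⟩ := hw.exists_crossing d hs (by linarith)
  obtain ⟨e₂, he₂, hhigh⟩ := hw.exists_crossing d (by linarith) ht
  refine ⟨e₁, he₁, e₂, he₂, ?_, Finset.mem_union_left _ (mem_crossing.2 hlow),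
    Finset.mem_union_right _ (mem_crossing.2 hhigh)⟩
  rintro rfl
  linarith [hstep e₁, hlow.1, hhigh.2]

lemma sum_crossing_eq_sum_indicator (c : E → ℝ) (θ : ℝ) :
    ∑ e ∈ crossing tl hd d θ, c e =
      ∑ e, (Ioc (d (tl e)) (d (hd e))).indicator (fun _ => c e) θ := by
  simp [crossing, Finset.sum_filter, indicator_apply]

lemma intervalIntegrable_sum_crossing (c : E → ℝ) (a b : ℝ) :
    IntervalIntegrable (fun θ => ∑ e ∈ crossing tl hd d θ, c e) volume a b := by
  simp_rw [sum_crossing_eq_sum_indicator]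
  exact ⟨integrable_finsetSum _ fun e _ => (intervalIntegrable_indicator_Ioc_const _ _ _ _ _).1,
    integrable_finsetSum _ fun e _ => (intervalIntegrable_indicator_Ioc_const _ _ _ _ _).2⟩

lemma integral_sum_crossing_le {c : E → ℝ} (hc : ∀ e, 0 ≤ c e) {a b : ℝ} (hab : a ≤ b) :
    ∫ θ in a..b, ∑ e ∈ crossing tl hd d θ, c e ≤
      ∑ e, c e * max (d (hd e) - d (tl e)) 0 := by
  simp_rw [sum_crossing_eq_sum_indicator]
  rw [intervalIntegral.integral_finsetSum fun _ _ => intervalIntegrable_indicator_Ioc_const ..]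
  exact Finset.sum_le_sum fun e _ => intervalIntegral_indicator_Ioc_const_le hab (hc e)

lemma exists_isDoubleCut_crossing_union_sum_le [DecidableEq E] {s t : V} {c : E → ℝ}
    (hc : ∀ e, 0 ≤ c e)
    (hstep : ∀ e, d (hd e) ≤ d (tl e) + 1) (hs : d s ≤ 0) (ht : 2 ≤ d t) :
    ∃ θ, IsDoubleCut tl hd s t (crossing tl hd d θ ∪ crossing tl hd d (θ + 1)) ∧
      ∑ e ∈ crossing tl hd d θ ∪ crossing tl hd d (θ + 1), c e ≤
        ∑ e, c e * max (d (hd e) - d (tl e)) 0 := by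
  set g : ℝ → ℝ := fun θ => ∑ e ∈ crossing tl hd d θ, c e
  have hg : ∀ a b, IntervalIntegrable g volume a b := intervalIntegrable_sum_crossing c
  have hshift : IntervalIntegrable (fun θ => g (θ + 1)) volume 0 1 := by
    simpa using (hg (0 + 1) (1 + 1)).comp_add_right 1
  have hfold : ∫ θ in (0 : ℝ)..1, (g θ + g (θ + 1)) = ∫ θ in (0 : ℝ)..2, g θ := by
    rw [intervalIntegral.integral_add (hg 0 1) hshift, intervalIntegral.integral_comp_add_right,
      zero_add, one_add_one_eq_two,
      intervalIntegral.integral_add_adjacent_intervals (hg 0 1) (hg 1 2)]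
  obtain ⟨θ, ⟨hθ₀, hθ₁⟩, hθ⟩ :=
    exists_mem_Ioc_le_intervalIntegral ((hg 0 1).add hshift)
  refine ⟨θ, isDoubleCut_crossing_union hstep (by linarith) (by linarith), ?_⟩
  have hunion := Finset.sum_union_inter (s₁ := crossing tl hd d θ)
    (s₂ := crossing tl hd d (θ + 1)) (f := c)
  have hinter : 0 ≤ ∑ e ∈ crossing tl hd d θ ∩ crossing tl hd d (θ + 1), c e :=
    Finset.sum_nonneg fun e _ => hc e
  calc ∑ e ∈ crossing tl hd d θ ∪ crossing tl hd d (θ + 1), c e ≤ g θ + g (θ + 1) := by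
        linarith
    _ ≤ ∫ θ in (0 : ℝ)..2, g θ := hfold ▸ hθ
    _ ≤ ∑ e, c e * max (d (hd e) - d (tl e)) 0 := integral_sum_crossing_le hc zero_le_two

end Crossing

section DoubleCut

variable {V E : Type} {tl hd : E → V} {s t : V}

lemma exists_isDoubleCut_sum_le_of_feasible [Fintype E] [DecidableEq E] {c y : E → ℝ}
    (hc : ∀ e, 0 ≤ c e)
    (hy : ∀ e, 0 ≤ y e ∧ y e ≤ 1)
    (hfeas : ∀ l : List E, DWalk tl hd s t l → l.Nodup → (2 : ℝ) ≤ (l.map y).sum) :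
    ∃ D : Finset E, IsDoubleCut tl hd s t D ∧ ∑ e ∈ D, c e ≤ ∑ e, c e * y e := by
  have hy₀ : ∀ e, 0 ≤ y e := fun e => (hy e).1
  have hstep := pathPotential_hd_le (tl := tl) (hd := hd) (s := s) hy₀
  obtain ⟨θ, hcut, hcost⟩ := exists_isDoubleCut_crossing_union_sum_le hc
    (fun e => (hstep e).trans (by linarith [(hy e).2]))
    (pathPotential_self hy₀).le (pathPotential_eq_two hy₀ hfeas).ge
  refine ⟨_, hcut, hcost.trans (Finset.sum_le_sum fun e _ => ?_)⟩
  exact mul_le_mul_of_nonneg_left (max_le (by linarith [hstep e]) (hy₀ e)) (hc e)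

lemma isDoubleCut_univ [Fintype E] (hst : s ≠ t) (hnost : ∀ e : E, ¬ (tl e = s ∧ hd e = t)) :
    IsDoubleCut tl hd s t Finset.univ := by
  rintro (_ | ⟨a, _ | ⟨b, l⟩⟩) hw hl
  · exact absurd hw.eq_of_nil hst
  · cases hw with
    | cons _ h => exact absurd ⟨rfl, h.eq_of_nil⟩ (hnost a)
  · exact ⟨a, by simp, b, by simp, fun hab => (List.nodup_cons.1 hl).1 (hab ▸ by simp),
      Finset.mem_univ _, Finset.mem_univ _⟩

lemma exists_isDoubleCut_forall_sum_le [Fintype E] (hst : s ≠ t)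
    (hnost : ∀ e : E, ¬ (tl e = s ∧ hd e = t)) (c : E → ℝ) :
    ∃ D : Finset E, IsDoubleCut tl hd s t D ∧
      ∀ D' : Finset E, IsDoubleCut tl hd s t D' → ∑ e ∈ D, c e ≤ ∑ e ∈ D', c e := by
  classical
  obtain ⟨D, hD, hmin⟩ := Finset.exists_min_image
    ({D | IsDoubleCut tl hd s t D} : Finset (Finset E)) (fun D => ∑ e ∈ D, c e)
    ⟨Finset.univ, by simpa using isDoubleCut_univ hst hnost⟩
  exact ⟨D, by simpa using hD, fun D' hD' => hmin D' (by simpa using hD')⟩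

lemma two_le_sum_map_ite_mem [DecidableEq E] {D : Finset E} (hD : IsDoubleCut tl hd s t D)
    {l : List E} (hw : DWalk tl hd s t l) (hl : l.Nodup) :
    (2 : ℝ) ≤ (l.map fun e => if e ∈ D then 1 else 0).sum := by
  obtain ⟨a, ha, b, hb, hab, haD, hbD⟩ := hD l hw hl
  rw [← List.sum_toFinset _ hl]
  calc (2 : ℝ) = ∑ e ∈ {a, b}, if e ∈ D then 1 else 0 := by
        rw [Finset.sum_pair hab, if_pos haD, if_pos hbD]; norm_num
    _ ≤ _ := Finset.sum_le_sum_of_subset_of_nonneg (by simp [Finset.insert_subset_iff, ha, hb])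
        fun e _ _ => by positivity

end DoubleCut

/-- The double-cut LP (minimize `∑ c_e x_e` subject to `∑_{e ∈ P} x_e ≥ 2` for
every `s`-`t` path `P` and `0 ≤ x ≤ 1`) has an integral (0/1-valued) optimal
solution, whose support is exactly a minimum-cost double cut. -/
theorem stmt18 {V E : Type} [Fintype E] [DecidableEq E] (tl hd : E → V)
    (s t : V) (hst : s ≠ t)
    (hnost : ∀ e : E, ¬ (tl e = s ∧ hd e = t))
    (c : E → ℝ) (hc : ∀ e, 0 ≤ c e) :
    ∃ x : E → ℝ,
      (∀ e, 0 ≤ x e ∧ x e ≤ 1) ∧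
      (∀ l : List E, DWalk tl hd s t l → l.Nodup → (2 : ℝ) ≤ (l.map x).sum) ∧
      (∀ e, x e = 0 ∨ x e = 1) ∧
      (∀ y : E → ℝ, (∀ e, 0 ≤ y e ∧ y e ≤ 1) →
        (∀ l : List E, DWalk tl hd s t l → l.Nodup → (2 : ℝ) ≤ (l.map y).sum) →
        ∑ e : E, c e * x e ≤ ∑ e : E, c e * y e) ∧
      ∃ D : Finset E, (∀ e : E, e ∈ D ↔ x e = 1) ∧
        IsDoubleCut tl hd s t D ∧
        (∀ D' : Finset E, IsDoubleCut tl hd s t D' →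
          ∑ e ∈ D, c e ≤ ∑ e ∈ D', c e) := by
  obtain ⟨D, hD, hmin⟩ := exists_isDoubleCut_forall_sum_le hst hnost c
  set x : E → ℝ := fun e => if e ∈ D then 1 else 0 with hx
  have hcost : ∑ e, c e * x e = ∑ e ∈ D, c e := by
    simp only [hx, mul_ite, mul_one, mul_zero, Finset.sum_ite_mem, Finset.univ_inter]
  refine ⟨x, fun e => ?_, fun l => two_le_sum_map_ite_mem hD, fun e => ?_,
    fun y hy hfeas => ?_, D, fun e => ?_, hD, hmin⟩
  · by_cases he : e ∈ D <;> simp [hx, he]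
  · by_cases he : e ∈ D <;> simp [hx, he]
  · obtain ⟨D', hD', hle⟩ := exists_isDoubleCut_sum_le_of_feasible hc hy hfeas
    exact hcost ▸ (hmin D' hD').trans hle
  · by_cases he : e ∈ D <;> simp [hx, he]
end

section
/- For every monopoly-free set system (E, ℱ) with costs c, and every truthful individually rational mechanism M on (E, ℱ), the frugality ratio of M is at least 1: there exists a bid/cost vector under which M's total payment is at least the value ν(c) of the buyer-pessimal LP. -/
open Finset

theorem sum_le_sum_univ_of_le_of_eq_zero {E : Type*} [Fintype E] {W : Finset E}
    {b p : E → ℝ} (hle : ∀ e ∈ W, b e ≤ p e) (hzero : ∀ e ∉ W, p e = 0) :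
    ∑ e ∈ W, b e ≤ ∑ e, p e :=
  calc ∑ e ∈ W, b e ≤ ∑ e ∈ W, p e := sum_le_sum hle
    _ = ∑ e, p e := sum_subset (subset_univ W) fun e _ he => hzero e he

theorem stmt19_general {E : Type*} [Fintype E]
    (F : Set (Finset E))
    (win : (E → ℝ) → Finset E) (pay : (E → ℝ) → E → ℝ)
    (hfeas : ∀ b : E → ℝ, win b ∈ F)
    (hIR : ∀ b : E → ℝ, ∀ e ∈ win b, b e ≤ pay b e)
    (hlose : ∀ b : E → ℝ, ∀ e : E, e ∉ win b → pay b e = 0)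
    (S : Finset E)
    (ν : E → ℝ)
    (hν3 : ∀ T ∈ F, ∑ e ∈ S, ν e ≤ ∑ e ∈ T, ν e) :
    ∃ b : E → ℝ, ∑ e ∈ S, ν e ≤ ∑ e : E, pay b e :=
  ⟨ν, (hν3 _ (hfeas ν)).trans (sum_le_sum_univ_of_le_of_eq_zero (hIR ν) (hlose ν))⟩

/-- For every monopoly-free set system with costs `c`, and every truthful
(monotone, threshold-paying) individually rational mechanism, there is a
bid/cost vector under which the mechanism's total payment is at least the
value of the buyer-pessimal Nash LP; hence the frugality ratio is at least 1. -/
theorem stmt19 {E : Type*} [Fintype E] [DecidableEq E]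
    (F : Set (Finset E)) (hne : F.Nonempty)
    (hmf : ∀ e : E, ∃ S ∈ F, e ∉ S)
    (win : (E → ℝ) → Finset E) (pay : (E → ℝ) → E → ℝ)
    (hfeas : ∀ b : E → ℝ, win b ∈ F)
    (hmono : ∀ (b : E → ℝ) (e : E) (b' : ℝ), e ∈ win b → b' ≤ b e →
      e ∈ win (Function.update b e b'))
    (hIR : ∀ b : E → ℝ, ∀ e ∈ win b, b e ≤ pay b e)
    (hlose : ∀ b : E → ℝ, ∀ e : E, e ∉ win b → pay b e = 0)
    (c : E → ℝ) (hc : ∀ e, 0 ≤ c e)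
    (S : Finset E) (hSF : S ∈ F)
    (hScheap : ∀ T ∈ F, ∑ e ∈ S, c e ≤ ∑ e ∈ T, c e)
    (ν : E → ℝ)
    (hν1 : ∀ e, c e ≤ ν e)
    (hν2 : ∀ e ∉ S, ν e = c e)
    (hν3 : ∀ T ∈ F, ∑ e ∈ S, ν e ≤ ∑ e ∈ T, ν e)
    (hopt : ∀ ν' : E → ℝ, (∀ e, c e ≤ ν' e) → (∀ e ∉ S, ν' e = c e) →
      (∀ T ∈ F, ∑ e ∈ S, ν' e ≤ ∑ e ∈ T, ν' e) →
      ∑ e ∈ S, ν' e ≤ ∑ e ∈ S, ν e) :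
    ∃ b : E → ℝ, ∑ e ∈ S, ν e ≤ ∑ e : E, pay b e :=
  stmt19_general F win pay hfeas hIR hlose S ν hν3
end
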